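/- For a tiled matrix of size p × q with p > q > 1, the critical path length of the TS-FT algorithm (FlatTree with TS kernels) equals 12p + 18q − 32. -/

import Mathlib

/-!
The finish times of the earliest-start schedule form a potential that dominates the weight
of every task and grows along every dependence by at least the weight of the later task;
hence no path is heavier than the largest finish time `12p + 18q - 32`, that of
`TSQRT(p, q, q)`. A path of exactly this weight runs down the serialized updates of column
`2` by column `1` and then sweeps the last row up to column `q`.
-/

namespace TiledQR

/-- An elimination `elim(i, piv, k)`: tile `(i, k)` is zeroed out by an orthogonal
transformation combining row `i` with pivot row `piv`. -/
structure Elim where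
  i : ℕ
  piv : ℕ
  k : ℕ
deriving DecidableEq

/-- `Before L e f` : the elimination `e` occurs strictly before `f` in the list `L`. -/
def Before (L : List Elim) (e f : Elim) : Prop :=
  ∃ a b : Fin L.length, (a : ℕ) < b ∧ L.get a = e ∧ L.get b = f

/-- `L` is a valid elimination list for a `p × q` tiled matrix: it contains exactly one
elimination for every sub-diagonal tile `(i, k)` (`1 ≤ k ≤ min p q`, `k < i ≤ p`);
every elimination `elim(i, piv, k)` comes after all eliminations `elim(i, *, k')` and
`elim(piv, *, k')` with `k' < k`, and before the elimination `elim(piv, *, k)` of its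
pivot row. -/
def ValidElimList (p q : ℕ) (L : List Elim) : Prop :=
  L.Nodup ∧
  (∀ e ∈ L, 1 ≤ e.k ∧ e.k ≤ min p q ∧ e.k < e.i ∧ e.i ≤ p ∧
      1 ≤ e.piv ∧ e.piv ≤ p ∧ e.piv ≠ e.i) ∧
  (∀ i k, 1 ≤ k → k ≤ min p q → k < i → i ≤ p → ∃! piv, Elim.mk i piv k ∈ L) ∧
  (∀ a b : Fin L.length, (L.get b).k < (L.get a).k →
      ((L.get b).i = (L.get a).i ∨ (L.get b).i = (L.get a).piv) → (b : ℕ) < a) ∧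
  (∀ a b : Fin L.length, (L.get b).k = (L.get a).k →
      (L.get b).i = (L.get a).piv → (a : ℕ) < b)

/-- The tasks of the tiled QR factorization with TT (triangle-on-top-of-triangle)
kernels. -/
inductive Task where
  | GEQRT (r k : ℕ)
  | UNMQR (r k j : ℕ)
  | TTQRT (i piv k : ℕ)
  | TTMQR (i piv k j : ℕ)
deriving DecidableEq

/-- Weights of the TT kernels, the unit being `n_b ^ 3 / 3` flops. -/
def weight : Task → ℕ
  | .GEQRT _ _ => 4
  | .UNMQR _ _ _ => 6
  | .TTQRT _ _ _ => 2
  | .TTMQR _ _ _ _ => 6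

/-- The tasks associated with a `p × q` tiled matrix and an elimination list `L`:
a factorization `GEQRT(r, k)` and updates `UNMQR(r, k, j)` (`k < j ≤ q`) for every tile
`(r, k)` with `k ≤ r ≤ p`, and, for every elimination `elim(i, piv, k)` of `L`, a task
`TTQRT(i, piv, k)` and updates `TTMQR(i, piv, k, j)` for `k < j ≤ q`. -/
def InTasks (p q : ℕ) (L : List Elim) : Task → Prop
  | .GEQRT r k => 1 ≤ k ∧ k ≤ min p q ∧ k ≤ r ∧ r ≤ p
  | .UNMQR r k j => 1 ≤ k ∧ k ≤ min p q ∧ k ≤ r ∧ r ≤ p ∧ k < j ∧ j ≤ q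
  | .TTQRT i piv k => Elim.mk i piv k ∈ L
  | .TTMQR i piv k j => Elim.mk i piv k ∈ L ∧ k < j ∧ j ≤ q

/-- The precedence (dependence) relation between the TT tasks.  Besides the flow
dependencies of the kernels, two tasks reading and writing a common tile
(a pivot tile reused by several eliminations of a column, or a pivot tile that is
subsequently zeroed out) are serialized in the order of the elimination list. -/
inductive Prec (L : List Elim) : Task → Task → Prop
  | geqrt_unmqr (r k j : ℕ) :
      Prec L (.GEQRT r k) (.UNMQR r k j)
  | geqrt_ttqrt_row (i piv k : ℕ) :
      Prec L (.GEQRT i k) (.TTQRT i piv k)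
  | geqrt_ttqrt_piv (i piv k : ℕ) :
      Prec L (.GEQRT piv k) (.TTQRT i piv k)
  | ttqrt_ttmqr (i piv k j : ℕ) :
      Prec L (.TTQRT i piv k) (.TTMQR i piv k j)
  | unmqr_ttmqr_row (i piv k j : ℕ) :
      Prec L (.UNMQR i k j) (.TTMQR i piv k j)
  | unmqr_ttmqr_piv (i piv k j : ℕ) :
      Prec L (.UNMQR piv k j) (.TTMQR i piv k j)
  | ttmqr_geqrt (a b i k : ℕ) : 2 ≤ k → (a = i ∨ b = i) →
      Prec L (.TTMQR a b (k - 1) k) (.GEQRT i k)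
  | ttqrt_serial (i i' piv k : ℕ) :
      Before L (Elim.mk i piv k) (Elim.mk i' piv k) →
      Prec L (.TTQRT i piv k) (.TTQRT i' piv k)
  | ttmqr_serial (i i' piv k j : ℕ) :
      Before L (Elim.mk i piv k) (Elim.mk i' piv k) →
      Prec L (.TTMQR i piv k j) (.TTMQR i' piv k j)
  | ttqrt_pivot_use (a i piv k : ℕ) :
      Prec L (.TTQRT a i k) (.TTQRT i piv k)
  | ttmqr_pivot_use (a i piv k j : ℕ) :
      Prec L (.TTMQR a i k j) (.TTMQR i piv k j)

/-- A path in the weighted task DAG. -/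
def IsPath (p q : ℕ) (L : List Elim) (path : List Task) : Prop :=
  (∀ t ∈ path, InTasks p q L t) ∧ path.Chain' (Prec L)

/-- The critical path length of the tiled algorithm given by the elimination list `L`:
the maximum total weight of a path in the weighted task DAG (equivalently, the makespan
of the earliest-start schedule with unboundedly many processors). -/
noncomputable def cpLength (p q : ℕ) (L : List Elim) : ℕ :=
  sSup { w : ℕ | ∃ path : List Task, IsPath p q L path ∧ w = (path.map weight).sum }
/-- The tasks of the tiled QR factorization with TS (triangle-on-top-of-square)
kernels. -/
inductive TSTask where
  | GEQRT (r k : ℕ)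
  | UNMQR (r k j : ℕ)
  | TSQRT (i piv k : ℕ)
  | TSMQR (i piv k j : ℕ)
deriving DecidableEq

/-- Weights of the TS kernels, the unit being `n_b ^ 3 / 3` flops. -/
def tsWeight : TSTask → ℕ
  | .GEQRT _ _ => 4
  | .UNMQR _ _ _ => 6
  | .TSQRT _ _ _ => 6
  | .TSMQR _ _ _ _ => 12

/-- Row `r` is the pivot of some elimination of column `k`. -/
def IsPivot (L : List Elim) (r k : ℕ) : Prop := ∃ e ∈ L, e.k = k ∧ e.piv = r

/-- The TS tasks associated with a `p × q` tiled matrix and an elimination list `L`: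
only the pivot tiles of each column (and the diagonal tile) are factored into
triangles; every elimination `elim(i, piv, k)` gives a task `TSQRT(i, piv, k)` and
updates `TSMQR(i, piv, k, j)` for `k < j ≤ q`. -/
def TSInTasks (p q : ℕ) (L : List Elim) : TSTask → Prop
  | .GEQRT r k => 1 ≤ k ∧ k ≤ min p q ∧ k ≤ r ∧ r ≤ p ∧ (r = k ∨ IsPivot L r k)
  | .UNMQR r k j => 1 ≤ k ∧ k ≤ min p q ∧ k ≤ r ∧ r ≤ p ∧ (r = k ∨ IsPivot L r k) ∧
      k < j ∧ j ≤ q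
  | .TSQRT i piv k => Elim.mk i piv k ∈ L
  | .TSMQR i piv k j => Elim.mk i piv k ∈ L ∧ k < j ∧ j ≤ q

/-- The precedence (dependence) relation between the TS tasks: flow dependencies of
the kernels; TSQRT (resp. TSMQR) tasks sharing the same pivot row (and column) are
serialized in list order; and every update of a tile from column `k - 1` precedes any
task of column `k` that factors, zeroes out, or uses that tile. -/
inductive TSPrec (L : List Elim) : TSTask → TSTask → Prop
  | geqrt_unmqr (r k j : ℕ) :
      TSPrec L (.GEQRT r k) (.UNMQR r k j)
  | geqrt_tsqrt (i piv k : ℕ) :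
      TSPrec L (.GEQRT piv k) (.TSQRT i piv k)
  | unmqr_tsmqr (i piv k j : ℕ) :
      TSPrec L (.UNMQR piv k j) (.TSMQR i piv k j)
  | tsqrt_tsmqr (i piv k j : ℕ) :
      TSPrec L (.TSQRT i piv k) (.TSMQR i piv k j)
  | tsqrt_serial (i i' piv k : ℕ) :
      Before L (Elim.mk i piv k) (Elim.mk i' piv k) →
      TSPrec L (.TSQRT i piv k) (.TSQRT i' piv k)
  | tsmqr_serial (i i' piv k j : ℕ) :
      Before L (Elim.mk i piv k) (Elim.mk i' piv k) →
      TSPrec L (.TSMQR i piv k j) (.TSMQR i' piv k j)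
  | tsqrt_pivot_use (a i piv k : ℕ) :
      TSPrec L (.TSQRT a i k) (.TSQRT i piv k)
  | tsmqr_pivot_use (a i piv k j : ℕ) :
      TSPrec L (.TSMQR a i k j) (.TSMQR i piv k j)
  | tsmqr_geqrt (a b r k : ℕ) : 2 ≤ k → (a = r ∨ b = r) →
      TSPrec L (.TSMQR a b (k - 1) k) (.GEQRT r k)
  | tsmqr_tsqrt (a b i piv k : ℕ) : 2 ≤ k → (a = i ∨ b = i ∨ a = piv ∨ b = piv) →
      TSPrec L (.TSMQR a b (k - 1) k) (.TSQRT i piv k)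
  | tsmqr_unmqr (a b r k j : ℕ) : 2 ≤ k → (a = r ∨ b = r) →
      TSPrec L (.TSMQR a b (k - 1) j) (.UNMQR r k j)
  | tsmqr_tsmqr (a b i piv k j : ℕ) : 2 ≤ k → (a = i ∨ b = i ∨ a = piv ∨ b = piv) →
      TSPrec L (.TSMQR a b (k - 1) j) (.TSMQR i piv k j)

/-- A path in the weighted TS task DAG. -/
def TSIsPath (p q : ℕ) (L : List Elim) (path : List TSTask) : Prop :=
  (∀ t ∈ path, TSInTasks p q L t) ∧ path.Chain' (TSPrec L)

/-- The critical path length of a tiled algorithm executed with TS kernels. -/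
noncomputable def tsCpLength (p q : ℕ) (L : List Elim) : ℕ :=
  sSup { w : ℕ | ∃ path : List TSTask, TSIsPath p q L path ∧
      w = (path.map tsWeight).sum }
/-- The FlatTree (Sameh-Kuck) elimination list: all eliminations of column `k` use the
diagonal row `k` as pivot; eliminations are listed column by column and, within a
column, by increasing row index. -/
def flatTreeList (p q : ℕ) : List Elim :=
  (List.range' 1 (min p q)).flatMap fun k =>
    (List.range' (k + 1) (p - k)).map fun i => Elim.mk i k k

end TiledQR

namespace List

theorem isChain_map_range' {α : Type*} {R : α → α → Prop} (f : ℕ → α) (s n : ℕ)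
    (h : ∀ i, s ≤ i → i + 1 < s + n → R (f i) (f (i + 1))) :
    ((range' s n).map f).IsChain R := by
  induction n generalizing s with
  | zero => simp
  | succ n ih =>
    rw [range'_succ, map_cons, isChain_cons]
    refine ⟨?_, ih (s + 1) fun i hi hin => h i (by omega) (by omega)⟩
    cases n with
    | zero => simp
    | succ n => simpa [range'_succ] using h s le_rfl (by omega)

theorem IsChain.sum_map_le_of_potential {α : Type*} {R : α → α → Prop}
    {S : α → Prop} {w F : α → ℕ} {B : ℕ} (hw : ∀ t, S t → w t ≤ F t)
    (hR : ∀ a b, S a → S b → R a b → F a + w b ≤ F b) (hB : ∀ t, S t → F t ≤ B)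
    {l : List α} (hl : l.IsChain R) (hS : ∀ t ∈ l, S t) : (l.map w).sum ≤ B := by
  have key : ∀ t l, (∀ s ∈ t :: l, S s) → (t :: l).IsChain R →
      F t + (l.map w).sum ≤ B := by
    intro t l
    induction l generalizing t with
    | nil => exact fun hS _ => by simpa using hB t (hS t (by simp))
    | cons u l ih =>
      intro hS hl
      rw [isChain_cons_cons] at hl
      have htu := hR t u (hS t (by simp)) (hS u (by simp)) hl.1
      have hu := ih u (fun s hs => hS s (mem_cons_of_mem t hs)) hl.2
      simp only [map_cons, sum_cons]
      omega
  cases l with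
  | nil => simp
  | cons t l =>
    have htl := key t l hS hl
    have ht := hw t (hS t (by simp))
    simp only [map_cons, sum_cons]
    omega

end List

namespace TiledQR

theorem before_iff_of_pairwise {r : Elim → Elim → Prop} (hr : ∀ e f, r e f → ¬ r f e)
    {L : List Elim} (hL : L.Pairwise r) {e f : Elim} :
    Before L e f ↔ e ∈ L ∧ f ∈ L ∧ r e f := by
  constructor
  · rintro ⟨a, b, hab, rfl, rfl⟩
    exact ⟨L.get_mem a, L.get_mem b, List.pairwise_iff_get.mp hL a b hab⟩
  · rintro ⟨he, hf, hef⟩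
    obtain ⟨a, rfl⟩ := List.mem_iff_get.mp he
    obtain ⟨b, rfl⟩ := List.mem_iff_get.mp hf
    refine ⟨a, b, ?_, rfl, rfl⟩
    rcases lt_trichotomy (a : ℕ) b with hab | hab | hab
    · exact hab
    · cases Fin.ext hab
      exact absurd hef (hr _ _ hef)
    · exact absurd (List.pairwise_iff_get.mp hL b a hab) (hr _ _ hef)

def FlatTreeLt (e f : Elim) : Prop := e.k < f.k ∨ e.k = f.k ∧ e.i < f.i

theorem mk_mem_flatTreeList {p q i piv k : ℕ} :
    Elim.mk i piv k ∈ flatTreeList p q ↔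
      piv = k ∧ 1 ≤ k ∧ k ≤ min p q ∧ k < i ∧ i ≤ p := by
  simp only [flatTreeList, List.mem_flatMap, List.mem_map, List.mem_range', Elim.mk.injEq]
  constructor
  · rintro ⟨k', ⟨a, ha, rfl⟩, i', ⟨b, hb, rfl⟩, rfl, rfl, rfl⟩
    omega
  · rintro ⟨rfl, h1, h2, h3, h4⟩
    exact ⟨piv, ⟨piv - 1, by omega, by omega⟩, i, ⟨i - piv - 1, by omega, by omega⟩,
      rfl, rfl, rfl⟩

theorem pairwise_flatTreeLt_flatTreeList (p q : ℕ) :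
    (flatTreeList p q).Pairwise FlatTreeLt := by
  rw [flatTreeList, List.pairwise_flatMap]
  refine ⟨fun k _ => ?_, (List.pairwise_lt_range').imp ?_⟩
  · rw [List.pairwise_map]
    exact (List.pairwise_lt_range').imp fun h => Or.inr ⟨rfl, h⟩
  · intro a b hab x hx y hy
    simp only [List.mem_map] at hx hy
    obtain ⟨i, -, rfl⟩ := hx
    obtain ⟨j, -, rfl⟩ := hy
    exact Or.inl hab

theorem before_flatTreeList_iff {p q : ℕ} {e f : Elim} :
    Before (flatTreeList p q) e f ↔
      e ∈ flatTreeList p q ∧ f ∈ flatTreeList p q ∧ FlatTreeLt e f :=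
  before_iff_of_pairwise (fun _ _ h h' => by unfold FlatTreeLt at h h'; omega)
    (pairwise_flatTreeLt_flatTreeList p q)

theorem isPivot_flatTreeList_iff {p q r k : ℕ} :
    IsPivot (flatTreeList p q) r k ↔ r = k ∧ 1 ≤ k ∧ k ≤ min p q ∧ k < p := by
  constructor
  · rintro ⟨⟨i, piv, k'⟩, he, hk, hr⟩
    dsimp only at hk hr
    subst hk hr
    have := mk_mem_flatTreeList.mp he
    omega
  · rintro ⟨rfl, h⟩
    exact ⟨⟨p, r, r⟩, mk_mem_flatTreeList.mpr (by omega), rfl, rfl⟩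

/-- Finish times of the earliest-start schedule of TS-FlatTree: the updates of a column are
serialized down the rows (`12` per row), and a row enters column `k` one `TSQRT` and one
`TSMQR` (`6 + 12`) after entering column `k - 1`. -/
def ftFinishTime : TSTask → ℕ
  | .GEQRT _ k => if k ≤ 1 then 4 else 30 * k - 34
  | .UNMQR _ k _ => if k ≤ 1 then 10 else 30 * k - 28
  | .TSQRT i _ k => if k ≤ 1 then 6 * i - 2 else 12 * i + 18 * k - 32
  | .TSMQR i _ k _ => if k ≤ 1 then 12 * i - 2 else 12 * i + 18 * k - 20

section FlatTree

variable {p q : ℕ}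

theorem tsWeight_le_ftFinishTime {t : TSTask} (ht : TSInTasks p q (flatTreeList p q) t) :
    tsWeight t ≤ ftFinishTime t := by
  cases t <;>
    simp only [TSInTasks, mk_mem_flatTreeList, tsWeight, ftFinishTime] at ht ⊢ <;>
    split_ifs <;> omega

theorem ftFinishTime_add_tsWeight_le {a b : TSTask} (hab : TSPrec (flatTreeList p q) a b)
    (ha : TSInTasks p q (flatTreeList p q) a) (hb : TSInTasks p q (flatTreeList p q) b) :
    ftFinishTime a + tsWeight b ≤ ftFinishTime b := by
  cases hab <;>
    simp only [TSInTasks, mk_mem_flatTreeList, isPivot_flatTreeList_iff,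
      before_flatTreeList_iff, FlatTreeLt, tsWeight, ftFinishTime] at * <;>
    split_ifs <;> omega

theorem ftFinishTime_le (hq : 1 < q) (hpq : q < p) {t : TSTask}
    (ht : TSInTasks p q (flatTreeList p q) t) : ftFinishTime t ≤ 12 * p + 18 * q - 32 := by
  have hmin : min p q = q := min_eq_right hpq.le
  cases t <;>
    simp only [TSInTasks, mk_mem_flatTreeList, hmin, ftFinishTime] at ht ⊢ <;>
    split_ifs <;> omega

end FlatTree

def lastRowSweep (p : ℕ) : ℕ → ℕ → List TSTask
  | k, 0 => [.TSQRT p k k]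
  | k, n + 1 => .TSQRT p k k :: .TSMQR p k k (k + 1) :: lastRowSweep p (k + 1) n

/-- The updates `TSMQR(i, 1, 1, 2)` all write the pivot tile `(1, 2)`, so they form a chain
down the rows; the last one frees tile `(p, 2)` for the sweep of the last row. -/
def ftCriticalPath (p q : ℕ) : List TSTask :=
  .GEQRT 1 1 :: .UNMQR 1 1 2 ::
    ((List.range' 2 (p - 1)).map (fun i => .TSMQR i 1 1 2) ++ lastRowSweep p 2 (q - 2))

section FlatTree

variable {p q : ℕ}

theorem head?_lastRowSweep (k n : ℕ) :
    (lastRowSweep p k n).head? = some (.TSQRT p k k) := by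
  cases n <;> rfl

theorem sum_map_tsWeight_lastRowSweep (k n : ℕ) :
    ((lastRowSweep p k n).map tsWeight).sum = 18 * n + 6 := by
  induction n generalizing k with
  | zero => rfl
  | succ n ih =>
    simp only [lastRowSweep, List.map_cons, List.sum_cons, ih, tsWeight]
    ring

theorem isChain_lastRowSweep {L : List Elim} {k : ℕ} (hk : 1 ≤ k) (n : ℕ) :
    (lastRowSweep p k n).IsChain (TSPrec L) := by
  induction n generalizing k with
  | zero => exact List.isChain_singleton _
  | succ n ih =>
    refine List.isChain_cons_cons.mpr
      ⟨.tsqrt_tsmqr p k k (k + 1), List.isChain_cons.mpr ⟨?_, ih (by omega)⟩⟩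
    rw [head?_lastRowSweep]
    rintro _ ⟨⟩
    exact .tsmqr_tsqrt p k p (k + 1) (k + 1) (by omega) (Or.inl rfl)

theorem tsInTasks_of_mem_lastRowSweep {k n : ℕ} (hk : 1 ≤ k) (hnq : k + n ≤ q)
    (hnp : k + n < p) {t : TSTask} (ht : t ∈ lastRowSweep p k n) :
    TSInTasks p q (flatTreeList p q) t := by
  induction n generalizing k with
  | zero =>
    obtain rfl := List.mem_singleton.mp ht
    exact mk_mem_flatTreeList.mpr (by omega)
  | succ n ih =>
    simp only [lastRowSweep, List.mem_cons] at ht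
    rcases ht with rfl | rfl | ht
    · exact mk_mem_flatTreeList.mpr (by omega)
    · exact ⟨mk_mem_flatTreeList.mpr (by omega), by omega, by omega⟩
    · exact ih (by omega) (by omega) (by omega) ht

theorem tsInTasks_of_mem_ftCriticalPath (hq : 1 < q) (hpq : q < p) {t : TSTask}
    (ht : t ∈ ftCriticalPath p q) : TSInTasks p q (flatTreeList p q) t := by
  have hmin : min p q = q := min_eq_right hpq.le
  simp only [ftCriticalPath, List.mem_cons, List.mem_append, List.mem_map,
    List.mem_range'] at ht
  rcases ht with rfl | rfl | (⟨i, ⟨c, hc, rfl⟩, rfl⟩ | ht)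
  · simp only [TSInTasks, hmin, true_or, and_true]; omega
  · simp only [TSInTasks, hmin, true_or, true_and]; omega
  · exact ⟨mk_mem_flatTreeList.mpr (by omega), by omega, by omega⟩
  · exact tsInTasks_of_mem_lastRowSweep (by omega) (by omega) (by omega) ht

theorem isChain_ftCriticalPath (hq : 1 < q) (hpq : q < p) :
    (ftCriticalPath p q).IsChain (TSPrec (flatTreeList p q)) := by
  have hmem : ∀ i, 2 ≤ i → i ≤ p → Elim.mk i 1 1 ∈ flatTreeList p q := fun i _ _ =>
    mk_mem_flatTreeList.mpr (by omega)
  have hcolumn : ((List.range' 2 (p - 1)).map (fun i => TSTask.TSMQR i 1 1 2)).IsChain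
      (TSPrec (flatTreeList p q)) :=
    List.isChain_map_range' _ _ _ fun i hi hip =>
      .tsmqr_serial i (i + 1) 1 1 2 (before_flatTreeList_iff.mpr
        ⟨hmem i hi (by omega), hmem (i + 1) (by omega) (by omega),
          Or.inr ⟨rfl, i.lt_succ_self⟩⟩)
  refine List.isChain_cons_cons.mpr ⟨.geqrt_unmqr 1 1 2, List.isChain_cons.mpr ⟨?_, ?_⟩⟩
  · obtain ⟨n, hn⟩ : ∃ n, p - 1 = n + 1 := ⟨p - 2, by omega⟩
    simp only [List.head?_append, hn, List.range'_succ, List.map_cons, List.head?_cons,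
      Option.some_or, Option.mem_def, Option.some.injEq, forall_eq']
    exact .unmqr_tsmqr 2 1 1 2
  · refine hcolumn.append (isChain_lastRowSweep (by omega) _) ?_
    rw [head?_lastRowSweep, List.getLast?_map, List.getLast?_range', if_neg (by omega)]
    rintro _ ⟨⟩ _ ⟨⟩
    rw [show 2 + (p - 1) - 1 = p by omega]
    exact .tsmqr_tsqrt p 1 p 2 2 le_rfl (Or.inl rfl)

theorem sum_map_tsWeight_ftCriticalPath (hq : 1 < q) (hpq : q < p) :
    ((ftCriticalPath p q).map tsWeight).sum = 12 * p + 18 * q - 32 := by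
  simp only [ftCriticalPath, List.map_cons, List.sum_cons, List.map_append, List.sum_append,
    List.map_map, Function.comp_def, tsWeight, sum_map_tsWeight_lastRowSweep, List.map_const',
    List.length_range', List.sum_replicate, smul_eq_mul]
  omega

end FlatTree

/-- **Proposition 2, case `p > q > 1`.** The critical path length of the TS-FT
algorithm (FlatTree with TS kernels) on a `p × q` matrix with `p > q > 1` is
`12p + 18q - 32`. -/
theorem tsft_cpLength_rect (p q : ℕ) (hq : 1 < q) (hpq : q < p) :
    tsCpLength p q (flatTreeList p q) = 12 * p + 18 * q - 32 := by
  have hpath : TSIsPath p q (flatTreeList p q) (ftCriticalPath p q) :=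
    ⟨fun _ => tsInTasks_of_mem_ftCriticalPath hq hpq, isChain_ftCriticalPath hq hpq⟩
  refine IsGreatest.csSup_eq
    ⟨⟨ftCriticalPath p q, hpath, (sum_map_tsWeight_ftCriticalPath hq hpq).symm⟩, ?_⟩
  rintro w ⟨path, ⟨hS, hR⟩, rfl⟩
  exact hR.sum_map_le_of_potential (fun _ => tsWeight_le_ftFinishTime)
    (fun _ _ ha hb hab => ftFinishTime_add_tsWeight_le hab ha hb)
    (fun _ => ftFinishTime_le hq hpq) hS

end TiledQR
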